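/- arXiv:2409.18684 — 2 statements merged into one kernel-verified Lean document; each statement's English description precedes it below -/
import Mathlib

section
/- Let X and Y be nonnegative absolutely continuous random variables with finite means, strictly increasing distribution functions F and G, and density functions f and g satisfying f(F^{-1}(p)) > 0 and g(G^{-1}(p)) > 0 for all p ∈ (0,1). Then X ≤_dmrl Y if and only if, for all 0 < p ≤ q < 1, (1/g(G^{-1}(p)))·∫_q^1 (1−t)/f(F^{-1}(t)) dt ≤ (1/f(F^{-1}(p)))·∫_q^1 (1−t)/g(G^{-1}(t)) dt. -/
open MeasureTheory Set Filter

/-- The (generalized inverse) quantile function of a distribution function `F`. -/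
noncomputable def quantile (F : ℝ → ℝ) (p : ℝ) : ℝ := sInf {x : ℝ | p ≤ F x}

/-- `F` is the distribution function of a nonnegative random variable
(with total mass one). -/
def IsNonnegCDF (F : ℝ → ℝ) : Prop :=
  Monotone F ∧ (∀ x : ℝ, x ≤ 0 → F x = 0) ∧ Tendsto F atTop (nhds 1)

/-- A distortion function: a left-continuous increasing map of `[0,1]` onto itself
with `h 0 = 0` and `h 1 = 1`. -/
def IsDistortionFn (h : ℝ → ℝ) : Prop :=
  MonotoneOn h (Icc 0 1) ∧ (∀ p ∈ Ioc (0:ℝ) 1, ContinuousWithinAt h (Iio p) p) ∧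
    h 0 = 0 ∧ h 1 = 1 ∧ MapsTo h (Icc 0 1) (Icc 0 1)

/-- `h` is starshaped: `h p / p` is increasing on `(0,1]`. -/
def Starshaped (h : ℝ → ℝ) : Prop := MonotoneOn (fun p => h p / p) (Ioc 0 1)

/-- `h` is antistarshaped: `h p / p` is decreasing on `(0,1]`. -/
def Antistarshaped (h : ℝ → ℝ) : Prop := AntitoneOn (fun p => h p / p) (Ioc 0 1)

/-- Distribution function of the distorted random variable `X_h`,
whose survival function is `h ∘ (1 - F)`. -/
noncomputable def distortedCDF (h F : ℝ → ℝ) : ℝ → ℝ := fun x => 1 - h (1 - F x)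

/-- `∫_0^{F⁻¹(p)} (1 - F(x)) dx`. -/
noncomputable def tttIntegral (F : ℝ → ℝ) (p : ℝ) : ℝ :=
  ∫ x in (0:ℝ)..(quantile F p), (1 - F x)

/-- `∫_{F⁻¹(p)}^∞ (1 - F(x)) dx`. -/
noncomputable def ewIntegral (F : ℝ → ℝ) (p : ℝ) : ℝ :=
  ∫ x in Ioi (quantile F p), (1 - F x)

/-- `∫_0^{F⁻¹(p)} F(x) dx`. -/
noncomputable def mitIntegral (F : ℝ → ℝ) (p : ℝ) : ℝ :=
  ∫ x in (0:ℝ)..(quantile F p), F x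

/-- Total time on test transform order. -/
def TTT_le (F G : ℝ → ℝ) : Prop := ∀ p ∈ Ioo (0:ℝ) 1, tttIntegral F p ≤ tttIntegral G p

/-- Excess wealth order. -/
def EW_le (F G : ℝ → ℝ) : Prop := ∀ p ∈ Ioo (0:ℝ) 1, ewIntegral F p ≤ ewIntegral G p

/-- Decreasing mean residual life order. -/
def DMRL_le (F G : ℝ → ℝ) : Prop :=
  MonotoneOn (fun p => ewIntegral G p / ewIntegral F p) (Ioo (0:ℝ) 1)

/-- Quantile mean inactivity time order. -/
def QMIT_le (F G : ℝ → ℝ) : Prop :=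
  AntitoneOn (fun p => mitIntegral F p / mitIntegral G p) (Ioo (0:ℝ) 1)

open Topology

/-!
Write `W_F(p) = ∫_{F⁻¹(p)}^∞ F̄`. Since `F(F⁻¹(p)) = p`, the inverse function theorem gives
`W_F'(p) = -(1 - p) / f(F⁻¹(p))`, and `W_F(p) → 0` as `p → 1`, so the two integrals in the
condition are `W_F(q)` and `W_G(q)`. The derivative of `W_G / W_F` at `p` has the sign of
`W_G(p) / f(F⁻¹(p)) - W_F(p) / g(G⁻¹(p))`, hence `X ≤_dmrl Y` is equivalent to the case
`p = q` of the condition; the case `p < q` follows by multiplying it with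
`W_F(q) / W_F(p) ≤ W_G(q) / W_G(p)`.
-/

section Calculus

variable {a b : ℝ}

theorem HasDerivAt.nonneg_of_monotoneOn_Ioo {g : ℝ → ℝ} {g' x : ℝ}
    (hd : HasDerivAt g g' x) (hg : MonotoneOn g (Ioo a b)) (hx : x ∈ Ioo a b) : 0 ≤ g' :=
  hd.hasDerivWithinAt.nonneg_of_monotoneOn
    (uniqueDiffWithinAt_iff_accPt.mp (uniqueDiffOn_Ioo a b x hx)) hg

theorem monotoneOn_div_iff_of_hasDerivAt {U V α β w : ℝ → ℝ}
    (hU : ∀ p ∈ Ioo a b, HasDerivAt U (-(w p * α p)) p)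
    (hV : ∀ p ∈ Ioo a b, HasDerivAt V (-(w p * β p)) p)
    (hUpos : ∀ p ∈ Ioo a b, 0 < U p) (hw : ∀ p ∈ Ioo a b, 0 < w p)
    (hα : ∀ p ∈ Ioo a b, 0 ≤ α p) :
    MonotoneOn (fun p => V p / U p) (Ioo a b) ↔
      ∀ p q, a < p → p ≤ q → q < b → β p * U q ≤ α p * V q := by
  have hratio : ∀ p ∈ Ioo a b, HasDerivAt (fun p => V p / U p)
      (w p * (α p * V p - β p * U p) / U p ^ 2) p := fun p hp =>
    ((hV p hp).div (hU p hp) (hUpos p hp).ne').congr_deriv (by ring)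
  have hratio_nonneg_iff : ∀ p ∈ Ioo a b,
      0 ≤ w p * (α p * V p - β p * U p) / U p ^ 2 ↔ β p * U p ≤ α p * V p := fun p hp => by
    rw [le_div_iff₀ (pow_pos (hUpos p hp) 2), zero_mul, mul_nonneg_iff_of_pos_left (hw p hp),
      sub_nonneg]
  constructor
  · intro hmono p q hp hpq hq
    have hp' : p ∈ Ioo a b := ⟨hp, hpq.trans_lt hq⟩
    have hq' : q ∈ Ioo a b := ⟨hp.trans_le hpq, hq⟩
    have hineq_p :=
      (hratio_nonneg_iff p hp').1 ((hratio p hp').nonneg_of_monotoneOn_Ioo hmono hp')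
    have hcross : V p * U q ≤ V q * U p :=
      (div_le_div_iff₀ (hUpos p hp') (hUpos q hq')).1 (hmono hp' hq' hpq)
    refine le_of_mul_le_mul_right ?_ (hUpos p hp')
    calc β p * U q * U p = β p * U p * U q := by ring
      _ ≤ α p * V p * U q := mul_le_mul_of_nonneg_right hineq_p (hUpos q hq').le
      _ = α p * (V p * U q) := by ring
      _ ≤ α p * (V q * U p) := mul_le_mul_of_nonneg_left hcross (hα p hp')
      _ = α p * V q * U p := by ring
  · intro hcond
    refine monotoneOn_of_hasDerivWithinAt_nonneg (convex_Ioo a b)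
      (fun p hp => (hratio p hp).continuousAt.continuousWithinAt)
      (f' := fun p => w p * (α p * V p - β p * U p) / U p ^ 2) ?_ ?_
    · rw [interior_Ioo]
      exact fun p hp => (hratio p hp).hasDerivWithinAt
    · rw [interior_Ioo]
      exact fun p hp => (hratio_nonneg_iff p hp).2 (hcond p p hp.1 le_rfl hp.2)

theorem integral_eq_sub_of_hasDerivAt_of_nonneg_of_tendsto {u u' : ℝ → ℝ} {ub : ℝ}
    (hab : a < b) (hderiv : ∀ x ∈ Ico a b, HasDerivAt u (u' x) x)
    (hnonneg : ∀ x ∈ Ioo a b, 0 ≤ u' x) (hb : Tendsto u (𝓝[<] b) (𝓝 ub)) :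
    ∫ x in a..b, u' x = ub - u a := by
  set N := Function.update u b ub
  have hNcont : ContinuousOn N (Icc a b) := by
    rw [continuousOn_update_iff, Icc_sdiff_right]
    exact ⟨fun x hx => (hderiv x hx).continuousAt.continuousWithinAt,
      fun _ => hb.mono_left (nhdsWithin_mono _ Ico_subset_Iio_self)⟩
  have hNderiv : ∀ x ∈ Ioo a b, HasDerivAt N (u' x) x := fun x hx =>
    (hderiv x (Ioo_subset_Ico_self hx)).congr_of_eventuallyEq (by
      filter_upwards [Iio_mem_nhds hx.2] with y hy using Function.update_of_ne hy.ne _ _)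
  have hint : IntervalIntegrable u' volume a b :=
    (intervalIntegrable_iff_integrableOn_Ioc_of_le hab.le).2
      (intervalIntegral.integrableOn_deriv_of_nonneg hNcont hNderiv hnonneg)
  simpa [N, hab.ne] using
    intervalIntegral.integral_eq_sub_of_hasDerivAt_of_le hab.le hNcont hNderiv hint

end Calculus

section SetIntegralIoi

variable {E : Type*} [NormedAddCommGroup E] [NormedSpace ℝ E] {a b : ℝ}

theorem hasDerivAt_setIntegral_Ioi [CompleteSpace E] {f : ℝ → E} (hf : IntegrableOn f (Ioi a))
    (hfc : Continuous f) (hab : a < b) :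
    HasDerivAt (fun u => ∫ x in Ioi u, f x) (-f b) b := by
  have hsplit : (fun u => ∫ x in Ioi u, f x) =ᶠ[𝓝 b]
      fun u => (∫ x in Ioi a, f x) - ∫ x in a..u, f x := by
    filter_upwards [Ioi_mem_nhds hab] with u hu
    rw [← intervalIntegral.integral_Ioi_sub_Ioi hf hu.le, sub_sub_cancel]
  exact ((hfc.integral_hasStrictDerivAt a b).hasDerivAt.const_sub _).congr_of_eventuallyEq hsplit

theorem tendsto_setIntegral_Ioi_atTop {f : ℝ → E} (hf : IntegrableOn f (Ioi a)) :
    Tendsto (fun u => ∫ x in Ioi u, f x) atTop (𝓝 0) := by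
  have h := (intervalIntegral_tendsto_integral_Ioi a hf tendsto_id).const_sub (∫ x in Ioi a, f x)
  rw [sub_self] at h
  refine h.congr' ?_
  filter_upwards [eventually_ge_atTop a] with u hu
  rw [id_eq, ← intervalIntegral.integral_Ioi_sub_Ioi hf hu, sub_sub_cancel]

end SetIntegralIoi

section Quantile

variable {F : ℝ → ℝ}

theorem IsNonnegCDF.le_one (hF : IsNonnegCDF F) (x : ℝ) : F x ≤ 1 :=
  hF.1.ge_of_tendsto hF.2.2 x

theorem IsNonnegCDF.lt_one (hF : IsNonnegCDF F) (hFs : StrictMonoOn F (Ici 0)) (x : ℝ) :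
    F x < 1 := by
  have hx₀ : (0 : ℝ) ≤ max x 0 := le_max_right x 0
  calc F x ≤ F (max x 0) := hF.1 (le_max_left x 0)
    _ < F (max x 0 + 1) :=
      hFs hx₀ (hx₀.trans (le_add_of_nonneg_right zero_le_one)) (lt_add_one _)
    _ ≤ 1 := hF.le_one _

theorem IsNonnegCDF.apply_pos (hF : IsNonnegCDF F) (hFs : StrictMonoOn F (Ici 0)) {x : ℝ}
    (hx : 0 < x) : 0 < F x := by
  simpa only [hF.2.1 0 le_rfl] using hFs (mem_Ici.2 le_rfl) hx.le hx

theorem IsNonnegCDF.pos_of_le_apply (hF : IsNonnegCDF F) {p x : ℝ} (hp : 0 < p)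
    (hx : p ≤ F x) : 0 < x :=
  not_le.1 fun hx₀ => (hp.trans_le hx).ne' (hF.2.1 x hx₀)

theorem quantile_le_of_le_apply (hF : IsNonnegCDF F) {p y : ℝ} (hp : 0 < p) (hy : p ≤ F y) :
    quantile F p ≤ y :=
  csInf_le ⟨0, fun _ hx => (hF.pos_of_le_apply hp hx).le⟩ hy

theorem apply_quantile (hF : IsNonnegCDF F) (hFc : Continuous F) {p : ℝ} (hp : p ∈ Ioo 0 1) :
    F (quantile F p) = p := by
  obtain ⟨y, hy⟩ : ∃ y, p ≤ F y := (hF.2.2.eventually (eventually_ge_nhds hp.2)).exists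
  obtain ⟨x, -, hFx⟩ := intermediate_value_Icc (hF.pos_of_le_apply hp.1 hy).le hFc.continuousOn
    ⟨(hF.2.1 0 le_rfl).trans_le hp.1.le, hy⟩
  have hQx : quantile F p ≤ x := quantile_le_of_le_apply hF hp.1 hFx.ge
  exact le_antisymm ((hF.1 hQx).trans_eq hFx)
    ((isClosed_le continuous_const hFc).csInf_mem ⟨y, hy⟩
      ⟨0, fun _ hx => (hF.pos_of_le_apply hp.1 hx).le⟩)

theorem quantile_pos (hF : IsNonnegCDF F) (hFc : Continuous F) {p : ℝ} (hp : p ∈ Ioo 0 1) :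
    0 < quantile F p :=
  hF.pos_of_le_apply hp.1 (apply_quantile hF hFc hp).ge

theorem quantile_apply (hF : IsNonnegCDF F) (hFc : Continuous F) (hFs : StrictMonoOn F (Ici 0))
    {x : ℝ} (hx : 0 < x) : quantile F (F x) = x := by
  have hFx : F x ∈ Ioo 0 1 := ⟨hF.apply_pos hFs hx, hF.lt_one hFs x⟩
  exact hFs.injOn (quantile_pos hF hFc hFx).le hx.le (apply_quantile hF hFc hFx)

theorem strictMonoOn_quantile (hF : IsNonnegCDF F) (hFc : Continuous F) :
    StrictMonoOn (quantile F) (Ioo 0 1) := fun p hp q hq hpq =>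
  lt_of_not_ge fun h => hpq.not_ge <| by
    simpa only [apply_quantile hF hFc hp, apply_quantile hF hFc hq] using hF.1 h

theorem image_quantile_Ioo (hF : IsNonnegCDF F) (hFc : Continuous F)
    (hFs : StrictMonoOn F (Ici 0)) : quantile F '' Ioo 0 1 = Ioi 0 :=
  Subset.antisymm (image_subset_iff.2 fun _ hp => quantile_pos hF hFc hp) fun x hx =>
    ⟨F x, ⟨hF.apply_pos hFs hx, hF.lt_one hFs x⟩, quantile_apply hF hFc hFs hx⟩

theorem continuousAt_quantile (hF : IsNonnegCDF F) (hFc : Continuous F)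
    (hFs : StrictMonoOn F (Ici 0)) {p : ℝ} (hp : p ∈ Ioo 0 1) : ContinuousAt (quantile F) p :=
  (strictMonoOn_quantile hF hFc).continuousAt_of_image_mem_nhds (Ioo_mem_nhds hp.1 hp.2) <| by
    rw [image_quantile_Ioo hF hFc hFs]
    exact Ioi_mem_nhds (quantile_pos hF hFc hp)

theorem hasDerivAt_quantile (hF : IsNonnegCDF F) (hFc : Continuous F)
    (hFs : StrictMonoOn F (Ici 0)) {p f' : ℝ} (hp : p ∈ Ioo 0 1)
    (hfd : HasDerivAt F f' (quantile F p)) (hf' : f' ≠ 0) : HasDerivAt (quantile F) f'⁻¹ p :=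
  hfd.of_local_left_inverse (continuousAt_quantile hF hFc hFs hp) hf' <| by
    filter_upwards [Ioo_mem_nhds hp.1 hp.2] with y hy using apply_quantile hF hFc hy

theorem tendsto_quantile_atTop (hF : IsNonnegCDF F) (hFc : Continuous F)
    (hFs : StrictMonoOn F (Ici 0)) : Tendsto (quantile F) (𝓝[<] 1) atTop := by
  refine tendsto_atTop.2 fun v => ?_
  filter_upwards [Ioo_mem_nhdsLT (max_lt (hF.lt_one hFs v) zero_lt_one)] with y hy
  obtain ⟨hvy, hy₀⟩ := max_lt_iff.1 hy.1
  refine le_of_not_gt fun h => hvy.not_ge ?_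
  simpa only [apply_quantile hF hFc ⟨hy₀, hy.2⟩] using hF.1 h.le

end Quantile

section ExcessWealth

variable {F : ℝ → ℝ}

theorem hasDerivAt_ewIntegral (hF : IsNonnegCDF F) (hFc : Continuous F)
    (hFs : StrictMonoOn F (Ici 0)) (hFmean : IntegrableOn (fun x => 1 - F x) (Ioi 0))
    {p f' : ℝ} (hp : p ∈ Ioo 0 1) (hfd : HasDerivAt F f' (quantile F p)) (hf' : f' ≠ 0) :
    HasDerivAt (ewIntegral F) (-((1 - p) / f')) p := by
  have h := (hasDerivAt_setIntegral_Ioi hFmean (continuous_const.sub hFc)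
    (quantile_pos hF hFc hp)).comp p (hasDerivAt_quantile hF hFc hFs hp hfd hf')
  rwa [apply_quantile hF hFc hp, neg_mul, ← div_eq_mul_inv] at h

theorem ewIntegral_pos (hF : IsNonnegCDF F) (hFc : Continuous F) (hFs : StrictMonoOn F (Ici 0))
    (hFmean : IntegrableOn (fun x => 1 - F x) (Ioi 0)) {p : ℝ} (hp : p ∈ Ioo 0 1) :
    0 < ewIntegral F p := by
  set b := quantile F p
  have hint : IntegrableOn (fun x => 1 - F x) (Ioi b) :=
    hFmean.mono_set (Ioi_subset_Ioi (quantile_pos hF hFc hp).le)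
  rw [ewIntegral, ← intervalIntegral.integral_interval_add_Ioi hint
    (hint.mono_set (Ioi_subset_Ioi (lt_add_one b).le))]
  exact add_pos_of_pos_of_nonneg
    (intervalIntegral.intervalIntegral_pos_of_pos_on
      ((continuous_const.sub hFc).intervalIntegrable _ _)
      (fun x _ => sub_pos.2 (hF.lt_one hFs x)) (lt_add_one b))
    (setIntegral_nonneg measurableSet_Ioi fun x _ => sub_nonneg.2 (hF.le_one x))

theorem tendsto_ewIntegral_one (hF : IsNonnegCDF F) (hFc : Continuous F)
    (hFs : StrictMonoOn F (Ici 0)) (hFmean : IntegrableOn (fun x => 1 - F x) (Ioi 0)) :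
    Tendsto (ewIntegral F) (𝓝[<] 1) (𝓝 0) :=
  (tendsto_setIntegral_Ioi_atTop hFmean).comp (tendsto_quantile_atTop hF hFc hFs)

theorem integral_eq_ewIntegral {f : ℝ → ℝ} (hF : IsNonnegCDF F) (hFc : Continuous F)
    (hFs : StrictMonoOn F (Ici 0)) (hfd : ∀ x, HasDerivAt F (f x) x)
    (hFmean : IntegrableOn (fun x => 1 - F x) (Ioi 0))
    (hfpos : ∀ p ∈ Ioo (0 : ℝ) 1, 0 < f (quantile F p)) {q : ℝ} (hq : q ∈ Ioo 0 1) :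
    ∫ t in q..1, (1 - t) / f (quantile F t) = ewIntegral F q := by
  have hderiv : ∀ t ∈ Ico q 1,
      HasDerivAt (-ewIntegral F) ((1 - t) / f (quantile F t)) t := fun t ht => by
    have ht' : t ∈ Ioo 0 1 := ⟨hq.1.trans_le ht.1, ht.2⟩
    simpa only [neg_neg] using
      (hasDerivAt_ewIntegral hF hFc hFs hFmean ht' (hfd _) (hfpos t ht').ne').neg
  have hnonneg : ∀ t ∈ Ioo q 1, 0 ≤ (1 - t) / f (quantile F t) := fun t ht =>
    div_nonneg (sub_nonneg.2 ht.2.le) (hfpos t ⟨hq.1.trans ht.1, ht.2⟩).le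
  rw [integral_eq_sub_of_hasDerivAt_of_nonneg_of_tendsto hq.2 hderiv hnonneg
    (tendsto_ewIntegral_one hF hFc hFs hFmean).neg,
    Pi.neg_apply, neg_zero, zero_sub, neg_neg]

end ExcessWealth

/-- **Lemma 3.** For nonnegative absolutely continuous random variables with finite means,
strictly increasing distribution functions `F`, `G` and densities `f`, `g` positive at the
quantiles, `X ≤_dmrl Y` iff for all `0 < p ≤ q < 1`,
`(1 / g(G⁻¹(p))) ∫_q^1 (1-t)/f(F⁻¹(t)) dt ≤ (1 / f(F⁻¹(p))) ∫_q^1 (1-t)/g(G⁻¹(t)) dt`. -/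
theorem dmrl_iff_quantile_integral_ineq_two_param
    (F G f g : ℝ → ℝ)
    (hF : IsNonnegCDF F) (hG : IsNonnegCDF G)
    (hFstrict : StrictMonoOn F (Ici 0)) (hGstrict : StrictMonoOn G (Ici 0))
    (hfd : ∀ x : ℝ, HasDerivAt F (f x) x) (hgd : ∀ x : ℝ, HasDerivAt G (g x) x)
    (hFmean : IntegrableOn (fun x => 1 - F x) (Ioi 0) volume)
    (hGmean : IntegrableOn (fun x => 1 - G x) (Ioi 0) volume)
    (hfpos : ∀ p ∈ Ioo (0:ℝ) 1, 0 < f (quantile F p))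
    (hgpos : ∀ p ∈ Ioo (0:ℝ) 1, 0 < g (quantile G p)) :
    DMRL_le F G ↔
      ∀ p q : ℝ, 0 < p → p ≤ q → q < 1 →
        (1 / g (quantile G p)) * ∫ t in q..1, (1 - t) / f (quantile F t) ≤
          (1 / f (quantile F p)) * ∫ t in q..1, (1 - t) / g (quantile G t) := by
  have hFc : Continuous F := continuous_iff_continuousAt.2 fun x => (hfd x).continuousAt
  have hGc : Continuous G := continuous_iff_continuousAt.2 fun x => (hgd x).continuousAt
  have hWF : ∀ p ∈ Ioo (0 : ℝ) 1,
      HasDerivAt (ewIntegral F) (-((1 - p) * (1 / f (quantile F p)))) p := fun p hp => by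
    simpa only [mul_one_div] using
      hasDerivAt_ewIntegral hF hFc hFstrict hFmean hp (hfd _) (hfpos p hp).ne'
  have hWG : ∀ p ∈ Ioo (0 : ℝ) 1,
      HasDerivAt (ewIntegral G) (-((1 - p) * (1 / g (quantile G p)))) p := fun p hp => by
    simpa only [mul_one_div] using
      hasDerivAt_ewIntegral hG hGc hGstrict hGmean hp (hgd _) (hgpos p hp).ne'
  rw [DMRL_le, monotoneOn_div_iff_of_hasDerivAt hWF hWG
    (fun p hp => ewIntegral_pos hF hFc hFstrict hFmean hp) (fun p hp => sub_pos.2 hp.2)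
    (fun p hp => (one_div_pos.2 (hfpos p hp)).le)]
  refine forall₂_congr fun p q => imp_congr_right fun hp => imp_congr_right fun hpq =>
    imp_congr_right fun hq => ?_
  have hq' : q ∈ Ioo (0 : ℝ) 1 := ⟨hp.trans_le hpq, hq⟩
  rw [integral_eq_ewIntegral hF hFc hFstrict hfd hFmean hfpos hq',
    integral_eq_ewIntegral hG hGc hGstrict hgd hGmean hgpos hq']
end

section
/- Let X and Y be nonnegative absolutely continuous random variables with finite means and strictly increasing distribution functions F and G, and let h be a strictly increasing distortion function whose dual distortion h*(p)=1−h(1−p) is antistarshaped. If X ≤_qmit Y, then X_h ≤_qmit Y_h. -/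
open MeasureTheory Set Filter

/-!
Write `φ p = 1 - h (1 - p)`, so that `X_h` has distribution function `φ ∘ F`. Its quantile at `p`
is `F⁻¹(θ p)` for the generalized inverse `θ` of `φ`, hence the qmit integral of `X_h` at `p` is
`A_F (θ p)` with `A_F t = ∫_0^{F⁻¹ t} φ (F x) dx`, and it suffices to show `A_F / A_G` decreasing.
Factor `φ (F x) = F x · r (F x)` with `r u = φ u / u` decreasing. By the layer-cake formula for
`r` and Tonelli, `A_F t = ∫_0^∞ M_F (min t (ℓ s)) ds`, where `M_F` is the qmit integral of `X`
and `ℓ s` is the point where `r` crosses the level `s`. So `A_F`, `A_G` are mixtures, with the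
same weights, of the truncations `t ↦ M (min t c)`. Since `M_F / M_G` is decreasing and `M_G`
increasing, for `t₁ ≤ t₂` the symmetrised inequality
`M_F(t₂∧c) M_G(t₁∧d) + M_F(t₂∧d) M_G(t₁∧c) ≤ M_F(t₁∧c) M_G(t₂∧d) + M_F(t₁∧d) M_G(t₂∧c)`
holds for all `c, d ≥ 0`; integrating it over `(c, d) = (ℓ s, ℓ r)` gives
`A_F t₂ · A_G t₁ ≤ A_F t₁ · A_G t₂`.
-/

open scoped ENNReal

namespace IsNonnegCDF

variable {F : ℝ → ℝ}

theorem apply_zero (hF : IsNonnegCDF F) : F 0 = 0 := hF.2.1 0 le_rfl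

theorem nonneg (hF : IsNonnegCDF F) (x : ℝ) : 0 ≤ F x := by
  rcases le_or_gt x 0 with hx | hx
  · exact (hF.2.1 x hx).ge
  · exact hF.apply_zero ▸ hF.1 hx.le

theorem le_one_s7 (hF : IsNonnegCDF F) (x : ℝ) : F x ≤ 1 :=
  ge_of_tendsto hF.2.2 (eventually_atTop.2 ⟨x, fun _ hy => hF.1 hy⟩)

theorem mem_Icc (hF : IsNonnegCDF F) (x : ℝ) : F x ∈ Icc (0:ℝ) 1 := ⟨hF.nonneg x, hF.le_one_s7 x⟩

theorem apply_pos_s7 (hF : IsNonnegCDF F) (hFs : StrictMonoOn F (Ici 0)) {x : ℝ} (hx : 0 < x) :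
    0 < F x :=
  hF.apply_zero ▸ hFs (le_refl (0:ℝ)) hx.le hx

theorem monotone_comp (hF : IsNonnegCDF F) {φ : ℝ → ℝ} (hφ : MonotoneOn φ (Icc 0 1)) :
    Monotone fun x => φ (F x) :=
  fun _ _ hxy => hφ (hF.mem_Icc _) (hF.mem_Icc _) (hF.1 hxy)

theorem quantile_zero (hF : IsNonnegCDF F) : quantile F 0 = 0 := by
  rw [quantile, show {x | 0 ≤ F x} = univ from eq_univ_of_forall hF.nonneg,
    Real.sInf_of_not_bddBelow not_bddBelow_univ]

theorem zero_mem_lowerBounds (hF : IsNonnegCDF F) {u : ℝ} (hu : 0 < u) :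
    (0:ℝ) ∈ lowerBounds {x | u ≤ F x} := fun x (hx : u ≤ F x) => by
  by_contra! hx0
  linarith [hF.2.1 x hx0.le]

theorem setOf_le_nonempty (hF : IsNonnegCDF F) {u : ℝ} (hu : u < 1) :
    {x | u ≤ F x}.Nonempty :=
  (hF.2.2.eventually (eventually_ge_nhds hu)).exists

theorem quantile_nonneg (hF : IsNonnegCDF F) {u : ℝ} (hu : u ∈ Ico (0:ℝ) 1) :
    0 ≤ quantile F u := by
  rcases hu.1.eq_or_lt with rfl | hu0
  · rw [hF.quantile_zero]
  · exact le_csInf (hF.setOf_le_nonempty hu.2) (hF.zero_mem_lowerBounds hu0)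

theorem apply_quantile (hF : IsNonnegCDF F) (hc : Continuous F) {u : ℝ}
    (hu : u ∈ Ico (0:ℝ) 1) : F (quantile F u) = u := by
  rcases hu.1.eq_or_lt with rfl | hu0
  · rw [hF.quantile_zero, hF.apply_zero]
  have hbdd : BddBelow {x | u ≤ F x} := ⟨0, hF.zero_mem_lowerBounds hu0⟩
  refine le_antisymm ?_
    ((isClosed_le continuous_const hc).csInf_mem (hF.setOf_le_nonempty hu.2) hbdd)
  refine le_of_tendsto (hc.continuousAt.continuousWithinAt (s := Iio (quantile F u)))
    (eventually_nhdsWithin_of_forall fun x (hx : x < quantile F u) => ?_)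
  by_contra! hux
  exact hx.not_ge (csInf_le hbdd hux.le)

theorem le_quantile_iff (hF : IsNonnegCDF F) (hFs : StrictMonoOn F (Ici 0))
    (hc : Continuous F) {u x : ℝ} (hx : 0 ≤ x) (hu : u ∈ Ico (0:ℝ) 1) :
    x ≤ quantile F u ↔ F x ≤ u := by
  conv_rhs => rw [← hF.apply_quantile hc hu]
  exact (hFs.le_iff_le hx (hF.quantile_nonneg hu)).symm

theorem lt_quantile_iff (hF : IsNonnegCDF F) (hFs : StrictMonoOn F (Ici 0))
    (hc : Continuous F) {u x : ℝ} (hx : 0 ≤ x) (hu : u ∈ Ico (0:ℝ) 1) :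
    x < quantile F u ↔ F x < u := by
  conv_rhs => rw [← hF.apply_quantile hc hu]
  exact (hFs.lt_iff_lt hx (hF.quantile_nonneg hu)).symm

theorem quantile_monotoneOn (hF : IsNonnegCDF F) (hFs : StrictMonoOn F (Ici 0))
    (hc : Continuous F) : MonotoneOn (quantile F) (Ico 0 1) := fun u hu _ hv huv =>
  (hF.le_quantile_iff hFs hc (hF.quantile_nonneg hu) hv).2 (by rwa [hF.apply_quantile hc hu])

theorem integral_comp_pos (hF : IsNonnegCDF F) (hFs : StrictMonoOn F (Ici 0))
    (hc : Continuous F) {φ : ℝ → ℝ} (hφ : MonotoneOn φ (Icc 0 1))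
    (hφpos : ∀ u ∈ Ioc (0:ℝ) 1, 0 < φ u) {t : ℝ} (ht : t ∈ Ioo (0:ℝ) 1) :
    0 < ∫ x in (0:ℝ)..quantile F t, φ (F x) := by
  have hq : 0 < quantile F t :=
    (hF.lt_quantile_iff hFs hc le_rfl ⟨ht.1.le, ht.2⟩).2 (by rw [hF.apply_zero]; exact ht.1)
  exact intervalIntegral.intervalIntegral_pos_of_pos_on (hF.monotone_comp hφ).intervalIntegrable
    (fun x hx => hφpos _ ⟨hF.apply_pos_s7 hFs hx.1, hF.le_one_s7 x⟩) hq

theorem mitIntegral_pos (hF : IsNonnegCDF F) (hFs : StrictMonoOn F (Ici 0))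
    (hc : Continuous F) {t : ℝ} (ht : t ∈ Ioo (0:ℝ) 1) : 0 < mitIntegral F t :=
  hF.integral_comp_pos hFs hc (φ := id) monotoneOn_id (fun _ hu => hu.1) ht

theorem mitIntegral_nonneg (hF : IsNonnegCDF F) {t : ℝ} (ht : t ∈ Ico (0:ℝ) 1) :
    0 ≤ mitIntegral F t :=
  intervalIntegral.integral_nonneg (hF.quantile_nonneg ht) fun x _ => hF.nonneg x

theorem mitIntegral_monotoneOn (hF : IsNonnegCDF F) (hFs : StrictMonoOn F (Ici 0))
    (hc : Continuous F) : MonotoneOn (mitIntegral F) (Ico 0 1) := fun _ hu _ hv huv =>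
  intervalIntegral.integral_mono_interval le_rfl (hF.quantile_nonneg hu)
    (hF.quantile_monotoneOn hFs hc hu hv huv) (ae_of_all _ hF.nonneg) (hc.intervalIntegrable _ _)

theorem ofReal_mitIntegral (hF : IsNonnegCDF F) (hc : Continuous F) {t : ℝ}
    (ht : t ∈ Ico (0:ℝ) 1) :
    ENNReal.ofReal (mitIntegral F t) = ∫⁻ x in Ioc 0 (quantile F t), ENNReal.ofReal (F x) := by
  rw [mitIntegral, intervalIntegral.integral_of_le (hF.quantile_nonneg ht),
    ofReal_integral_eq_lintegral_ofReal (hc.integrableOn_Icc.mono_set Ioc_subset_Icc_self)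
      (ae_of_all _ hF.nonneg)]

end IsNonnegCDF

section Distortion

variable {φ : ℝ → ℝ}

noncomputable def distortionInv (φ : ℝ → ℝ) (p : ℝ) : ℝ :=
  sInf {u | u ∈ Icc (0:ℝ) 1 ∧ p ≤ φ u}

theorem distortionInv_mem_Icc (h1 : φ 1 = 1) {p : ℝ} (hp : p ≤ 1) :
    distortionInv φ p ∈ Icc (0:ℝ) 1 :=
  ⟨le_csInf ⟨1, right_mem_Icc.2 zero_le_one, hp.trans h1.ge⟩ fun _ hu => hu.1.1,
    csInf_le ⟨0, fun _ hu => hu.1.1⟩ ⟨right_mem_Icc.2 zero_le_one, hp.trans h1.ge⟩⟩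

theorem le_apply_distortionInv (hrc : ∀ u ∈ Ico (0:ℝ) 1, ContinuousWithinAt φ (Ioi u) u)
    (h1 : φ 1 = 1) {p : ℝ} (hp : p ≤ 1) : p ≤ φ (distortionInv φ p) := by
  set S := {u | u ∈ Icc (0:ℝ) 1 ∧ p ≤ φ u}
  have hbdd : BddBelow S := ⟨0, fun _ hu => hu.1.1⟩
  obtain ⟨hθ0, hθ1⟩ := distortionInv_mem_Icc h1 hp
  rcases hθ1.eq_or_lt with hθ | hθ
  · rwa [hθ, h1]
  have hcont : ContinuousWithinAt φ S (distortionInv φ p) :=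
    (continuousWithinAt_insert_self.2 (hrc _ ⟨hθ0, hθ⟩)).mono fun u hu =>
      (csInf_le hbdd hu).eq_or_lt.imp Eq.symm id
  have : (nhdsWithin (distortionInv φ p) S).NeBot := mem_closure_iff_nhdsWithin_neBot.1
    (csInf_mem_closure ⟨1, right_mem_Icc.2 zero_le_one, hp.trans h1.ge⟩ hbdd)
  exact ge_of_tendsto hcont (eventually_nhdsWithin_of_forall fun _ hu => hu.2)

theorem distortionInv_le_iff (hφ : MonotoneOn φ (Icc 0 1))
    (hrc : ∀ u ∈ Ico (0:ℝ) 1, ContinuousWithinAt φ (Ioi u) u) (h1 : φ 1 = 1)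
    {p u : ℝ} (hp : p ≤ 1) (hu : u ∈ Icc (0:ℝ) 1) : distortionInv φ p ≤ u ↔ p ≤ φ u :=
  ⟨fun h => (le_apply_distortionInv hrc h1 hp).trans (hφ (distortionInv_mem_Icc h1 hp) hu h),
    fun h => csInf_le ⟨0, fun _ hv => hv.1.1⟩ ⟨hu, h⟩⟩

theorem distortionInv_mono (h1 : φ 1 = 1) {p q : ℝ} (hq : q ≤ 1) (hpq : p ≤ q) :
    distortionInv φ p ≤ distortionInv φ q :=
  csInf_le_csInf ⟨0, fun _ hu => hu.1.1⟩ ⟨1, right_mem_Icc.2 zero_le_one, hq.trans h1.ge⟩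
    fun _ hu => ⟨hu.1, hpq.trans hu.2⟩

theorem distortionInv_pos (hφ : MonotoneOn φ (Icc 0 1))
    (hrc : ∀ u ∈ Ico (0:ℝ) 1, ContinuousWithinAt φ (Ioi u) u) (h0 : φ 0 = 0) (h1 : φ 1 = 1)
    {p : ℝ} (hp : p ∈ Ioc (0:ℝ) 1) : 0 < distortionInv φ p := by
  by_contra! h
  have := (distortionInv_le_iff hφ hrc h1 hp.2 (left_mem_Icc.2 zero_le_one)).1 h
  linarith [hp.1]

theorem quantile_comp_eq_quantile_distortionInv {F : ℝ → ℝ} (hF : ∀ x, F x ∈ Icc (0:ℝ) 1)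
    (hφ : MonotoneOn φ (Icc 0 1)) (hrc : ∀ u ∈ Ico (0:ℝ) 1, ContinuousWithinAt φ (Ioi u) u)
    (h1 : φ 1 = 1) {p : ℝ} (hp : p ≤ 1) :
    quantile (fun x => φ (F x)) p = quantile F (distortionInv φ p) := by
  unfold quantile
  congr 1
  ext x
  exact (distortionInv_le_iff hφ hrc h1 hp (hF x)).symm

theorem Antistarshaped.le_apply (hanti : Antistarshaped φ) (h1 : φ 1 = 1) {u : ℝ}
    (hu : u ∈ Ioc (0:ℝ) 1) : u ≤ φ u := by
  have : φ 1 / 1 ≤ φ u / u := hanti hu ⟨one_pos, le_rfl⟩ hu.2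
  rwa [h1, div_one, one_le_div hu.1] at this

theorem Antistarshaped.distortionInv_le (hanti : Antistarshaped φ) (hφ : MonotoneOn φ (Icc 0 1))
    (hrc : ∀ u ∈ Ico (0:ℝ) 1, ContinuousWithinAt φ (Ioi u) u) (h1 : φ 1 = 1) {p : ℝ}
    (hp : p ∈ Ioc (0:ℝ) 1) : distortionInv φ p ≤ p :=
  (distortionInv_le_iff hφ hrc h1 hp.2 ⟨hp.1.le, hp.2⟩).2 (hanti.le_apply h1 hp)

theorem Antistarshaped.pos (hanti : Antistarshaped φ) (h1 : φ 1 = 1) :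
    ∀ u ∈ Ioc (0:ℝ) 1, 0 < φ u := fun _ hu => hu.1.trans_le (hanti.le_apply h1 hu)

/-- Where the ratio `φ u / u`, decreasing for antistarshaped `φ`, crosses the level `s`
(`0` if it stays `≤ s` on `(0,1]`). -/
noncomputable def starLevel (φ : ℝ → ℝ) (s : ℝ) : ℝ :=
  sSup (insert 0 {u | u ∈ Ioc (0:ℝ) 1 ∧ s < φ u / u})

theorem bddAbove_starLevel_set (s : ℝ) :
    BddAbove (insert 0 {u | u ∈ Ioc (0:ℝ) 1 ∧ s < φ u / u}) :=
  ⟨1, fun _ hu => hu.elim (fun h => h ▸ zero_le_one) fun h => h.1.2⟩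

theorem starLevel_nonneg (s : ℝ) : 0 ≤ starLevel φ s :=
  le_csSup (bddAbove_starLevel_set s) (mem_insert 0 _)

theorem starLevel_antitone : Antitone (starLevel φ) := fun s _ hss =>
  csSup_le_csSup (bddAbove_starLevel_set s) (insert_nonempty _ _)
    (insert_subset_insert fun _ hu => ⟨hu.1, hss.trans_lt hu.2⟩)

theorem min_starLevel_mem_Ico {t : ℝ} (ht : t ∈ Ico (0:ℝ) 1) (s : ℝ) :
    min t (starLevel φ s) ∈ Ico (0:ℝ) 1 :=
  ⟨le_min ht.1 (starLevel_nonneg s), (min_le_left _ _).trans_lt ht.2⟩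

theorem le_starLevel_of_lt_div {u s : ℝ} (hu : u ∈ Ioc (0:ℝ) 1) (hs : s < φ u / u) :
    u ≤ starLevel φ s :=
  le_csSup (bddAbove_starLevel_set s) (mem_insert_of_mem _ ⟨hu, hs⟩)

theorem Antistarshaped.lt_div_of_lt_starLevel (hanti : Antistarshaped φ) {u s : ℝ}
    (hu : u ∈ Ioc (0:ℝ) 1) (hlt : u < starLevel φ s) : s < φ u / u := by
  obtain ⟨v, hv, huv⟩ := exists_lt_of_lt_csSup (insert_nonempty _ _) hlt
  rcases hv with rfl | hv
  · exact absurd hu.1 huv.not_gt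
  · exact hv.2.trans_le (hanti hu hv.1 huv.le)

end Distortion

namespace IsDistortionFn

variable {h : ℝ → ℝ}

theorem monotoneOn_dual (hdist : IsDistortionFn h) :
    MonotoneOn (fun p => 1 - h (1 - p)) (Icc 0 1) := fun u hu v hv huv => by
  have := hdist.1 ⟨sub_nonneg.2 hv.2, by linarith [hv.1]⟩ ⟨sub_nonneg.2 hu.2, by linarith [hu.1]⟩
    (by linarith : 1 - v ≤ 1 - u)
  simp only
  linarith

theorem continuousWithinAt_dual (hdist : IsDistortionFn h) :
    ∀ u ∈ Ico (0:ℝ) 1, ContinuousWithinAt (fun p => 1 - h (1 - p)) (Ioi u) u := fun u hu =>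
  continuousWithinAt_const.sub <|
    (hdist.2.1 (1 - u) ⟨by linarith [hu.2], by linarith [hu.1]⟩).comp
      (continuous_const.sub continuous_id).continuousWithinAt
      fun v (hv : u < v) => show 1 - v < 1 - u by linarith

theorem dual_zero (hdist : IsDistortionFn h) : 1 - h (1 - 0) = 0 := by
  rw [sub_zero, hdist.2.2.2.1, sub_self]

theorem dual_one (hdist : IsDistortionFn h) : 1 - h (1 - 1) = 1 := by
  rw [sub_self, hdist.2.2.1, sub_zero]

theorem mitIntegral_distortedCDF (hdist : IsDistortionFn h) {F : ℝ → ℝ} (hF : IsNonnegCDF F)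
    {p : ℝ} (hp : p ≤ 1) :
    mitIntegral (distortedCDF h F) p =
      ∫ x in (0:ℝ)..quantile F (distortionInv (fun p => 1 - h (1 - p)) p), 1 - h (1 - F x) := by
  change ∫ x in (0:ℝ)..quantile (fun x => 1 - h (1 - F x)) p, 1 - h (1 - F x) = _
  rw [quantile_comp_eq_quantile_distortionInv hF.mem_Icc hdist.monotoneOn_dual
    hdist.continuousWithinAt_dual hdist.dual_one hp]

end IsDistortionFn

theorem ofReal_mul_eq_setLIntegral_indicator {a : ℝ} (ha : 0 ≤ a) (b : ℝ) :
    ENNReal.ofReal (a * b) = ∫⁻ s in Ioi 0, (Iio b).indicator (fun _ => ENNReal.ofReal a) s := by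
  rw [lintegral_indicator_const measurableSet_Iio, Measure.restrict_apply measurableSet_Iio,
    Iio_inter_Ioi, Real.volume_Ioo, sub_zero, ENNReal.ofReal_mul ha]

theorem setLIntegral_eq_of_Ioo_subset_of_subset_Ioc {μ : Measure ℝ} [NullSingletonClass μ]
    {f : ℝ → ℝ≥0∞} {S : Set ℝ} {a b : ℝ} (hIoo : Ioo a b ⊆ S) (hIoc : S ⊆ Ioc a b) :
    ∫⁻ x in S, f x ∂μ = ∫⁻ x in Ioc a b, f x ∂μ :=
  le_antisymm (lintegral_mono_set hIoc)
    ((setLIntegral_congr Ioo_ae_eq_Ioc).symm.trans_le (lintegral_mono_set hIoo))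

namespace IsNonnegCDF

variable {F φ : ℝ → ℝ}

theorem Ioo_quantile_min_starLevel_subset (hF : IsNonnegCDF F) (hFs : StrictMonoOn F (Ici 0))
    (hc : Continuous F) (hanti : Antistarshaped φ) {t : ℝ} (ht : t ∈ Ico (0:ℝ) 1) (s : ℝ) :
    Ioo 0 (quantile F (min t (starLevel φ s))) ⊆
      {x | s < φ (F x) / F x} ∩ Ioc 0 (quantile F t) := by
  have hmin := min_starLevel_mem_Ico (φ := φ) ht s
  rintro x ⟨hx0, hx⟩
  have hFx : F x < min t (starLevel φ s) := (hF.lt_quantile_iff hFs hc hx0.le hmin).1 hx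
  refine ⟨hanti.lt_div_of_lt_starLevel ⟨hF.apply_pos_s7 hFs hx0, hF.le_one_s7 x⟩
    (hFx.trans_le (min_le_right _ _)), hx0, ?_⟩
  exact (hx.trans_le (hF.quantile_monotoneOn hFs hc hmin ht (min_le_left _ _))).le

theorem subset_Ioc_quantile_min_starLevel (hF : IsNonnegCDF F) (hFs : StrictMonoOn F (Ici 0))
    (hc : Continuous F) {t : ℝ} (ht : t ∈ Ico (0:ℝ) 1) (s : ℝ) :
    {x | s < φ (F x) / F x} ∩ Ioc 0 (quantile F t) ⊆
      Ioc 0 (quantile F (min t (starLevel φ s))) := by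
  have hmin := min_starLevel_mem_Ico (φ := φ) ht s
  rintro x ⟨hs, hx0, hx⟩
  refine ⟨hx0, (hF.le_quantile_iff hFs hc hx0.le hmin).2 (le_min ?_ ?_)⟩
  · exact (hF.le_quantile_iff hFs hc hx0.le ht).1 hx
  · exact le_starLevel_of_lt_div ⟨hF.apply_pos_s7 hFs hx0, hF.le_one_s7 x⟩ hs

theorem ofReal_integral_comp_eq_lintegral_mitIntegral (hF : IsNonnegCDF F)
    (hFs : StrictMonoOn F (Ici 0)) (hc : Continuous F) (hφ : MonotoneOn φ (Icc 0 1))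
    (hanti : Antistarshaped φ) (h1 : φ 1 = 1) {t : ℝ} (ht : t ∈ Ico (0:ℝ) 1) :
    ENNReal.ofReal (∫ x in (0:ℝ)..quantile F t, φ (F x)) =
      ∫⁻ s in Ioi 0, ENNReal.ofReal (mitIntegral F (min t (starLevel φ s))) := by
  have hW : Measurable fun x => φ (F x) / F x :=
    (hF.monotone_comp hφ).measurable.div hc.measurable
  set K : ℝ → ℝ → ℝ≥0∞ := fun x s =>
    {p : ℝ × ℝ | p.2 < φ (F p.1) / F p.1}.indicator (fun p => ENNReal.ofReal (F p.1)) (x, s)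
  have hK : Measurable (Function.uncurry K) :=
    (ENNReal.measurable_ofReal.comp (hc.measurable.comp measurable_fst)).indicator
      (measurableSet_lt measurable_snd (hW.comp measurable_fst))
  have hlayer : ∀ x ∈ Ioc 0 (quantile F t),
      ENNReal.ofReal (φ (F x)) = ∫⁻ s in Ioi 0, K x s := fun x hx => by
    rw [← mul_div_cancel₀ (φ (F x)) (hF.apply_pos_s7 hFs hx.1).ne']
    exact ofReal_mul_eq_setLIntegral_indicator (hF.nonneg x) _
  have hlevel : ∀ s, ∫⁻ x in Ioc 0 (quantile F t), K x s =
      ENNReal.ofReal (mitIntegral F (min t (starLevel φ s))) := fun s => by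
    have hS : MeasurableSet {x | s < φ (F x) / F x} := measurableSet_lt measurable_const hW
    rw [hF.ofReal_mitIntegral hc (min_starLevel_mem_Ico ht s),
      ← setLIntegral_eq_of_Ioo_subset_of_subset_Ioc
        (Ioo_quantile_min_starLevel_subset hF hFs hc hanti ht s)
        (subset_Ioc_quantile_min_starLevel hF hFs hc ht s),
      ← Measure.restrict_restrict hS, ← lintegral_indicator hS]
    rfl
  calc ENNReal.ofReal (∫ x in (0:ℝ)..quantile F t, φ (F x))
      = ∫⁻ x in Ioc 0 (quantile F t), ENNReal.ofReal (φ (F x)) := by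
        rw [intervalIntegral.integral_of_le (hF.quantile_nonneg ht),
          ofReal_integral_eq_lintegral_ofReal
            ((hF.monotone_comp hφ).intervalIntegrable (μ := volume)).1
            (ae_restrict_of_forall_mem measurableSet_Ioc fun x hx =>
              (hanti.pos h1 _ ⟨hF.apply_pos_s7 hFs hx.1, hF.le_one_s7 x⟩).le)]
    _ = ∫⁻ x in Ioc 0 (quantile F t), ∫⁻ s in Ioi 0, K x s :=
        setLIntegral_congr_fun measurableSet_Ioc hlayer
    _ = ∫⁻ s in Ioi 0, ∫⁻ x in Ioc 0 (quantile F t), K x s :=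
        lintegral_lintegral_swap hK.aemeasurable
    _ = _ := lintegral_congr hlevel

end IsNonnegCDF

theorem mul_add_mul_min_le_of_cross {a b : ℝ → ℝ}
    (hcross : ∀ u ∈ Ico (0:ℝ) 1, ∀ v ∈ Ico (0:ℝ) 1, u ≤ v → a v * b u ≤ a u * b v)
    (hb : MonotoneOn b (Ico 0 1)) (hb0 : ∀ u ∈ Ico (0:ℝ) 1, 0 ≤ b u)
    {t₁ t₂ c d : ℝ} (ht₁ : 0 < t₁) (ht₂ : t₂ < 1) (h12 : t₁ ≤ t₂) (hbt₁ : 0 < b t₁)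
    (hc : 0 ≤ c) (hd : 0 ≤ d) :
    a (min t₂ c) * b (min t₁ d) + a (min t₂ d) * b (min t₁ c) ≤
      a (min t₁ c) * b (min t₂ d) + a (min t₁ d) * b (min t₂ c) := by
  wlog hcd : c ≤ d generalizing c d
  · linarith [this hd hc (le_of_not_ge hcd)]
  have hmem : ∀ {u}, 0 ≤ u → u ≤ t₂ → u ∈ Ico (0:ℝ) 1 := fun h0 h2 => ⟨h0, h2.trans_lt ht₂⟩
  have ht₁' : t₁ ∈ Ico (0:ℝ) 1 := hmem ht₁.le h12
  rcases le_total t₁ c with h1c | hc1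
  · rw [min_eq_left h1c, min_eq_left (h1c.trans hcd)]
    have hc' := hcross t₁ ht₁' (min t₂ c) (hmem (le_min (ht₁.le.trans h12) hc) (min_le_left _ _))
      (le_min h12 h1c)
    have hd' := hcross t₁ ht₁' (min t₂ d)
      (hmem (le_min (ht₁.le.trans h12) hd) (min_le_left _ _)) (le_min h12 (h1c.trans hcd))
    linarith
  rcases le_total d t₁ with hd1 | h1d
  · rw [min_eq_right hc1, min_eq_right (hc1.trans h12), min_eq_right hd1,
      min_eq_right (hd1.trans h12)]
  rw [min_eq_right hc1, min_eq_right (hc1.trans h12), min_eq_left h1d]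
  have he : min t₂ d ∈ Ico (0:ℝ) 1 := hmem (le_min (ht₁.le.trans h12) hd) (min_le_left _ _)
  have hce := hcross c (hmem hc (hc1.trans h12)) t₁ ht₁' hc1
  have h1e := hcross t₁ ht₁' _ he (le_min h12 h1d)
  have hbe := hb ht₁' he (le_min h12 h1d)
  have hbc := hb0 c (hmem hc (hc1.trans h12))
  -- after multiplying by `b t₁ > 0`, the claim follows from `b c * h1e` and
  -- `(b e - b t₁) * (a c * b t₁ - a t₁ * b c) ≥ 0`, where `e = min t₂ d`
  refine le_of_mul_le_mul_left ?_ hbt₁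
  nlinarith [mul_le_mul_of_nonneg_right h1e hbc, mul_nonneg (sub_nonneg.2 hbe) (sub_nonneg.2 hce)]

theorem lintegral_mul_lintegral_le_of_forall {α : Type*} [MeasurableSpace α] {μ : Measure α}
    [SFinite μ] {f₁ f₂ g₁ g₂ : α → ℝ≥0∞} (hf₁ : Measurable f₁) (hf₂ : Measurable f₂)
    (hg₁ : Measurable g₁) (hg₂ : Measurable g₂)
    (h : ∀ x y, f₂ x * g₁ y + f₂ y * g₁ x ≤ f₁ x * g₂ y + f₁ y * g₂ x) :
    (∫⁻ x, f₂ x ∂μ) * ∫⁻ x, g₁ x ∂μ ≤ (∫⁻ x, f₁ x ∂μ) * ∫⁻ x, g₂ x ∂μ := by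
  have hsymm : ∀ {f g : α → ℝ≥0∞}, Measurable f → Measurable g →
      2 * ((∫⁻ x, f x ∂μ) * ∫⁻ x, g x ∂μ) = ∫⁻ z, f z.1 * g z.2 + f z.2 * g z.1 ∂μ.prod μ :=
    fun {f g} hf hg => by
      have hswap := lintegral_prod_swap (μ := μ) (ν := μ) fun z : α × α => f z.1 * g z.2
      simp only [Prod.fst_swap, Prod.snd_swap] at hswap
      rw [lintegral_add_left (by fun_prop), hswap,
        lintegral_prod_mul hf.aemeasurable hg.aemeasurable, two_mul]
  refine (ENNReal.mul_le_mul_iff_right two_ne_zero ENNReal.ofNat_ne_top).1 ?_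
  rw [hsymm hf₂ hg₁, hsymm hf₁ hg₂]
  exact lintegral_mono fun z => h z.1 z.2

theorem lintegral_min_mul_lintegral_min_le {μ : Measure ℝ} [SFinite μ] {a b ℓ : ℝ → ℝ}
    (hcross : ∀ u ∈ Ico (0:ℝ) 1, ∀ v ∈ Ico (0:ℝ) 1, u ≤ v → a v * b u ≤ a u * b v)
    (ha : MonotoneOn a (Ico 0 1)) (ha0 : ∀ u ∈ Ico (0:ℝ) 1, 0 ≤ a u)
    (hb : MonotoneOn b (Ico 0 1)) (hb0 : ∀ u ∈ Ico (0:ℝ) 1, 0 ≤ b u)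
    (hℓ : Antitone ℓ) (hℓ0 : ∀ s, 0 ≤ ℓ s)
    {t₁ t₂ : ℝ} (ht₁ : 0 < t₁) (ht₂ : t₂ < 1) (h12 : t₁ ≤ t₂) (hbt₁ : 0 < b t₁) :
    (∫⁻ s, ENNReal.ofReal (a (min t₂ (ℓ s))) ∂μ) * ∫⁻ s, ENNReal.ofReal (b (min t₁ (ℓ s))) ∂μ ≤
      (∫⁻ s, ENNReal.ofReal (a (min t₁ (ℓ s))) ∂μ) *
        ∫⁻ s, ENNReal.ofReal (b (min t₂ (ℓ s))) ∂μ := by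
  have hmem : ∀ {t}, 0 ≤ t → t < 1 → ∀ s, min t (ℓ s) ∈ Ico (0:ℝ) 1 :=
    fun h0 h1 s => ⟨le_min h0 (hℓ0 s), (min_le_left _ _).trans_lt h1⟩
  have hmeas : ∀ {m : ℝ → ℝ}, MonotoneOn m (Ico 0 1) → ∀ {t}, 0 ≤ t → t < 1 →
      Measurable fun s => ENNReal.ofReal (m (min t (ℓ s))) :=
    fun {_} hm {t} h0 h1 => Antitone.measurable fun s s' hss => ENNReal.ofReal_le_ofReal
      (hm (hmem h0 h1 s') (hmem h0 h1 s) (min_le_min_left t (hℓ hss)))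
  have ht₁' : t₁ < 1 := h12.trans_lt ht₂
  have ht₂' : 0 ≤ t₂ := ht₁.le.trans h12
  refine lintegral_mul_lintegral_le_of_forall (hmeas ha ht₁.le ht₁') (hmeas ha ht₂' ht₂)
    (hmeas hb ht₁.le ht₁') (hmeas hb ht₂' ht₂) fun s r => ?_
  have hofReal : ∀ {x y z w : ℝ}, 0 ≤ x → 0 ≤ y → 0 ≤ z → 0 ≤ w →
      ENNReal.ofReal x * ENNReal.ofReal y + ENNReal.ofReal z * ENNReal.ofReal w =
        ENNReal.ofReal (x * y + z * w) := fun hx hy hz hw => by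
    rw [ENNReal.ofReal_add (mul_nonneg hx hy) (mul_nonneg hz hw), ENNReal.ofReal_mul hx,
      ENNReal.ofReal_mul hz]
  rw [hofReal (ha0 _ (hmem ht₂' ht₂ s)) (hb0 _ (hmem ht₁.le ht₁' r)) (ha0 _ (hmem ht₂' ht₂ r))
      (hb0 _ (hmem ht₁.le ht₁' s)),
    hofReal (ha0 _ (hmem ht₁.le ht₁' s)) (hb0 _ (hmem ht₂' ht₂ r)) (ha0 _ (hmem ht₁.le ht₁' r))
      (hb0 _ (hmem ht₂' ht₂ s))]
  exact ENNReal.ofReal_le_ofReal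
    (mul_add_mul_min_le_of_cross hcross hb hb0 ht₁ ht₂ h12 hbt₁ (hℓ0 s) (hℓ0 r))

theorem QMIT_le.cross_mul_le {F G : ℝ → ℝ} (hle : QMIT_le F G) (hF : IsNonnegCDF F)
    (hG : IsNonnegCDF G) (hGs : StrictMonoOn G (Ici 0)) (hcG : Continuous G) :
    ∀ u ∈ Ico (0:ℝ) 1, ∀ v ∈ Ico (0:ℝ) 1, u ≤ v →
      mitIntegral F v * mitIntegral G u ≤ mitIntegral F u * mitIntegral G v := by
  intro u hu v hv huv
  rcases hu.1.eq_or_lt with rfl | hu0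
  · simp [mitIntegral, hF.quantile_zero, hG.quantile_zero]
  have hv' : v ∈ Ioo (0:ℝ) 1 := ⟨hu0.trans_le huv, hv.2⟩
  exact (div_le_div_iff₀ (hG.mitIntegral_pos hGs hcG hv')
    (hG.mitIntegral_pos hGs hcG ⟨hu0, hu.2⟩)).1 (hle ⟨hu0, hu.2⟩ hv' huv)

theorem integral_comp_mul_integral_comp_le {F G φ : ℝ → ℝ} (hF : IsNonnegCDF F)
    (hFs : StrictMonoOn F (Ici 0)) (hcF : Continuous F) (hG : IsNonnegCDF G)
    (hGs : StrictMonoOn G (Ici 0)) (hcG : Continuous G) (hφ : MonotoneOn φ (Icc 0 1))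
    (hanti : Antistarshaped φ) (h1 : φ 1 = 1)
    (hcross : ∀ u ∈ Ico (0:ℝ) 1, ∀ v ∈ Ico (0:ℝ) 1, u ≤ v →
      mitIntegral F v * mitIntegral G u ≤ mitIntegral F u * mitIntegral G v)
    {t₁ t₂ : ℝ} (ht₁ : t₁ ∈ Ioo (0:ℝ) 1) (ht₂ : t₂ ∈ Ioo (0:ℝ) 1) (h12 : t₁ ≤ t₂) :
    (∫ x in (0:ℝ)..quantile F t₂, φ (F x)) * (∫ x in (0:ℝ)..quantile G t₁, φ (G x)) ≤
      (∫ x in (0:ℝ)..quantile F t₁, φ (F x)) * ∫ x in (0:ℝ)..quantile G t₂, φ (G x) := by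
  have hposF := fun {t} (ht : t ∈ Ioo (0:ℝ) 1) =>
    hF.integral_comp_pos hFs hcF hφ (hanti.pos h1) ht
  have hposG := hG.integral_comp_pos hGs hcG hφ (hanti.pos h1) ht₂
  rw [← ENNReal.ofReal_le_ofReal_iff (mul_pos (hposF ht₁) hposG).le,
    ENNReal.ofReal_mul (hposF ht₂).le, ENNReal.ofReal_mul (hposF ht₁).le,
    hF.ofReal_integral_comp_eq_lintegral_mitIntegral hFs hcF hφ hanti h1 ⟨ht₁.1.le, ht₁.2⟩,
    hF.ofReal_integral_comp_eq_lintegral_mitIntegral hFs hcF hφ hanti h1 ⟨ht₂.1.le, ht₂.2⟩,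
    hG.ofReal_integral_comp_eq_lintegral_mitIntegral hGs hcG hφ hanti h1 ⟨ht₁.1.le, ht₁.2⟩,
    hG.ofReal_integral_comp_eq_lintegral_mitIntegral hGs hcG hφ hanti h1 ⟨ht₂.1.le, ht₂.2⟩]
  exact lintegral_min_mul_lintegral_min_le hcross (hF.mitIntegral_monotoneOn hFs hcF)
    (fun _ => hF.mitIntegral_nonneg) (hG.mitIntegral_monotoneOn hGs hcG)
    (fun _ => hG.mitIntegral_nonneg) starLevel_antitone starLevel_nonneg ht₁.1 ht₂.2 h12
    (hG.mitIntegral_pos hGs hcG ht₁)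

theorem qmit_preserved_by_antistarshaped_dual_distortion_general
    (F G f g h : ℝ → ℝ)
    (hF : IsNonnegCDF F) (hG : IsNonnegCDF G)
    (hFstrict : StrictMonoOn F (Ici 0)) (hGstrict : StrictMonoOn G (Ici 0))
    (hfd : ∀ x : ℝ, HasDerivAt F (f x) x) (hgd : ∀ x : ℝ, HasDerivAt G (g x) x)
    (hdist : IsDistortionFn h)
    (hdualanti : Antistarshaped (fun p => 1 - h (1 - p)))
    (hle : QMIT_le F G) :
    QMIT_le (distortedCDF h F) (distortedCDF h G) := by
  have hcF : Continuous F := continuous_iff_continuousAt.2 fun x => (hfd x).continuousAt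
  have hcG : Continuous G := continuous_iff_continuousAt.2 fun x => (hgd x).continuousAt
  have hmono := hdist.monotoneOn_dual
  have hrc := hdist.continuousWithinAt_dual
  have h1 := hdist.dual_one
  have hθ : ∀ p ∈ Ioo (0:ℝ) 1, distortionInv (fun p => 1 - h (1 - p)) p ∈ Ioo (0:ℝ) 1 :=
    fun p hp => ⟨distortionInv_pos hmono hrc hdist.dual_zero h1 ⟨hp.1, hp.2.le⟩,
      (hdualanti.distortionInv_le hmono hrc h1 ⟨hp.1, hp.2.le⟩).trans_lt hp.2⟩
  have hpos := fun {t} (ht : t ∈ Ioo (0:ℝ) 1) =>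
    hG.integral_comp_pos hGstrict hcG hmono (hdualanti.pos h1) ht
  intro p₁ hp₁ p₂ hp₂ hp
  simp only
  rw [hdist.mitIntegral_distortedCDF hF hp₁.2.le, hdist.mitIntegral_distortedCDF hF hp₂.2.le,
    hdist.mitIntegral_distortedCDF hG hp₁.2.le, hdist.mitIntegral_distortedCDF hG hp₂.2.le,
    div_le_div_iff₀ (hpos (hθ p₂ hp₂)) (hpos (hθ p₁ hp₁))]
  exact integral_comp_mul_integral_comp_le hF hFstrict hcF hG hGstrict hcG hmono hdualanti h1
    (hle.cross_mul_le hF hG hGstrict hcG) (hθ p₁ hp₁) (hθ p₂ hp₂)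
    (distortionInv_mono h1 hp₂.2.le hp)

/-- **Theorem 5 (preservation of the qmit order).**
Let `X`, `Y` be nonnegative absolutely continuous random variables with finite means and
strictly increasing distribution functions `F`, `G`, and let `h` be a strictly increasing
distortion function whose dual distortion `h*(p) = 1 - h(1-p)` is antistarshaped.
If `X ≤_qmit Y`, then `X_h ≤_qmit Y_h`. -/
theorem qmit_preserved_by_antistarshaped_dual_distortion
    (F G f g h : ℝ → ℝ)
    (hF : IsNonnegCDF F) (hG : IsNonnegCDF G)
    (hFstrict : StrictMonoOn F (Ici 0)) (hGstrict : StrictMonoOn G (Ici 0))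
    (hfd : ∀ x : ℝ, HasDerivAt F (f x) x) (hgd : ∀ x : ℝ, HasDerivAt G (g x) x)
    (hFmean : IntegrableOn (fun x => 1 - F x) (Ioi 0) volume)
    (hGmean : IntegrableOn (fun x => 1 - G x) (Ioi 0) volume)
    (hdist : IsDistortionFn h) (hstrict : StrictMonoOn h (Icc 0 1))
    (hdualanti : Antistarshaped (fun p => 1 - h (1 - p)))
    (hle : QMIT_le F G) :
    QMIT_le (distortedCDF h F) (distortedCDF h G) :=
  qmit_preserved_by_antistarshaped_dual_distortion_general F G f g h hF hG hFstrict hGstrict hfd hgd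
    hdist hdualanti hle
end
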